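/- arXiv:1001.0535 — 2 statements merged into one kernel-verified Lean document; each statement's English description precedes it below -/
import Mathlib

section
/- Let A, B be positive invertible operators with mI ≤ A, B ≤ MI, 0 < m < M, h = M/m, ν ∈ [0,1], r = min{ν, 1−ν}. Then S(√h) · A♯_ν B ≥ (1−ν)A + νB − 2r((A+B)/2 − A♯_{1/2}B) in the Loewner order. -/
/-!
Put `T = A^{-1/2} B A^{-1/2}`; its spectrum lies in `[h⁻¹, h]`, and both sides of the inequality
are `A^{1/2} (·) A^{1/2}` applied to functions of `T`. By the continuous functional calculus it
therefore suffices to prove the scalar inequality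
`(1 - ν) + ν x - 2r ((1 + x)/2 - √x) ≤ S(√h) x^ν` for `x ∈ [h⁻¹, h]`.
For `ν ≤ 1/2` its left side is `1 + 2ν (√x - 1)`, so it is the reverse weighted AM-GM inequality
`1 + l (s - 1) ≤ S(k) s^l` for `s ∈ [k⁻¹, k]`, `l ∈ [0, 1]`; the case `ν ≥ 1/2` follows by
substituting `x⁻¹` for `x`. The reverse AM-GM inequality holds at `s = k` and `s = k⁻¹` because
`exp t ≥ 1 + t`, and in between because `s ↦ S(k) s^l - 1 - l (s - 1)` is concave.
-/

variable {H : Type*} [NormedAddCommGroup H] [InnerProductSpace ℂ H] [CompleteSpace H]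

/-- The weighted operator geometric mean `A ♯_ν B = A^{1/2} (A^{-1/2} B A^{-1/2})^ν A^{1/2}`. -/
noncomputable def geomMean (A B : H →L[ℂ] H) (ν : ℝ) : H →L[ℂ] H :=
  A ^ ((1:ℝ)/2) * (A ^ (-(1:ℝ)/2) * B * A ^ (-(1:ℝ)/2)) ^ ν * A ^ ((1:ℝ)/2)

/-- Specht's ratio `S(h) = h^{1/(h-1)} / (e log h^{1/(h-1)})` for `h ≠ 1`, with `S(1) = 1`. -/
noncomputable def specht (h : ℝ) : ℝ :=
  if h = 1 then 1
  else h ^ ((1:ℝ)/(h-1)) / (Real.exp 1 * Real.log (h ^ ((1:ℝ)/(h-1))))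

open Set

section Specht

open Real

lemma specht_eq_of_one_lt {h : ℝ} (hh : 1 < h) :
    specht h = (h - 1) / log h * exp (log h / (h - 1) - 1) := by
  have hK : h - 1 ≠ 0 := by linarith
  rw [specht, if_neg (by linarith), log_rpow (by linarith), rpow_def_of_pos (by linarith),
    exp_sub]
  field_simp

lemma one_add_mul_sub_one_le_specht_mul_rpow {h : ℝ} (hh : 1 < h) (μ : ℝ) :
    1 + μ * (h - 1) ≤ specht h * h ^ μ := by
  have hL : 0 < log h := log_pos hh
  have hK : 0 < h - 1 := by linarith
  have hexp := add_one_le_exp (μ * log h + log h / (h - 1) - 1)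
  calc 1 + μ * (h - 1) = (h - 1) / log h * ((μ * log h + log h / (h - 1) - 1) + 1) := by
        field_simp; ring
    _ ≤ (h - 1) / log h * exp (μ * log h + log h / (h - 1) - 1) := by gcongr
    _ = specht h * h ^ μ := by
        rw [specht_eq_of_one_lt hh, rpow_def_of_pos (by linarith), mul_assoc, ← exp_add]
        ring_nf

lemma one_le_specht {h : ℝ} (hh : 1 < h) : 1 ≤ specht h := by
  simpa using one_add_mul_sub_one_le_specht_mul_rpow hh 0

lemma one_add_mul_sub_one_le_specht_mul_rpow_of_mem_Icc {h l s : ℝ} (hh : 1 < h)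
    (hl : l ∈ Icc 0 1) (hs : s ∈ Icc h⁻¹ h) : 1 + l * (s - 1) ≤ specht h * s ^ l := by
  have h0 : 0 < h := by linarith
  have hS : 0 ≤ specht h := by linarith [one_le_specht hh]
  have hconc : ConcaveOn ℝ (Ici 0) fun s => specht h * s ^ l - (1 + l * (s - 1)) := by
    refine ((((concaveOn_rpow hl.1 hl.2).smul hS).sub
      ((convexOn_id (convex_Ici 0)).smul hl.1)).add_const (l - 1)).congr fun s _ => ?_
    simp only [Pi.add_apply, Pi.sub_apply, smul_eq_mul, id]
    ring
  have hmin := hconc.min_le_of_mem_Icc (mem_Ici.2 (inv_nonneg.2 h0.le)) (mem_Ici.2 h0.le) hs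
  have hright : 0 ≤ specht h * h ^ l - (1 + l * (h - 1)) := by
    linarith [one_add_mul_sub_one_le_specht_mul_rpow hh l]
  have hleft : 0 ≤ specht h * h⁻¹ ^ l - (1 + l * (h⁻¹ - 1)) := by
    have hdual := one_add_mul_sub_one_le_specht_mul_rpow hh (1 - l)
    rw [rpow_sub h0, rpow_one] at hdual
    have hscale : specht h * h⁻¹ ^ l - (1 + l * (h⁻¹ - 1)) =
        h⁻¹ * (specht h * (h / h ^ l) - (1 + (1 - l) * (h - 1))) := by
      rw [inv_rpow h0.le]; field_simp; ring
    rw [hscale]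
    exact mul_nonneg (inv_nonneg.2 h0.le) (sub_nonneg.2 hdual)
  linarith [le_min hleft hright]

lemma one_add_two_mul_sqrt_sub_one_le_specht_sqrt_mul_rpow {k ν x : ℝ} (hk : 1 < k)
    (hν : ν ∈ Icc 0 (1 / 2)) (hx : x ∈ Icc k⁻¹ k) :
    1 + 2 * ν * (√x - 1) ≤ specht √k * x ^ ν := by
  have hx0 : 0 ≤ x := le_trans (by positivity) hx.1
  have hsqrt : √x ∈ Icc (√k)⁻¹ √k := by
    rw [← sqrt_inv]; exact ⟨sqrt_le_sqrt hx.1, sqrt_le_sqrt hx.2⟩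
  have := one_add_mul_sub_one_le_specht_mul_rpow_of_mem_Icc (l := 2 * ν)
    (lt_sqrt_of_sq_lt (by simpa)) ⟨by linarith [hν.1], by linarith [hν.2]⟩ hsqrt
  rw [sqrt_eq_rpow x] at this ⊢
  rwa [← rpow_mul hx0, one_div_mul_eq_div, mul_div_cancel_left₀ _ two_ne_zero] at this

lemma refinedYoung_le_specht_sqrt_mul_rpow {k ν x : ℝ} (hk : 1 < k) (hν : ν ∈ Icc 0 1)
    (hx : x ∈ Icc k⁻¹ k) :
    (1 - ν) + ν * x - 2 * min ν (1 - ν) * ((1 + x) / 2 - √x) ≤ specht √k * x ^ ν := by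
  rcases le_total ν (1 / 2) with hν2 | hν2
  · rw [min_eq_left (by linarith)]
    linarith [one_add_two_mul_sqrt_sub_one_le_specht_sqrt_mul_rpow hk ⟨hν.1, hν2⟩ hx]
  · rw [min_eq_right (by linarith)]
    have hx0 : 0 < x := lt_of_lt_of_le (by positivity) hx.1
    have hxinv : x⁻¹ ∈ Icc k⁻¹ k := ⟨inv_anti₀ hx0 hx.2, inv_le_of_inv_le₀ (by positivity) hx.1⟩
    have hdual := mul_le_mul_of_nonneg_left
      (one_add_two_mul_sqrt_sub_one_le_specht_sqrt_mul_rpow (ν := 1 - ν) hk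
        ⟨by linarith [hν.2], by linarith⟩ hxinv) hx0.le
    have hsqrt : x * √x⁻¹ = √x := by
      rw [sqrt_inv, ← mul_self_sqrt hx0.le, sqrt_mul_self (sqrt_nonneg x)]; field_simp
    have hpow : x * (specht √k * x⁻¹ ^ (1 - ν)) = specht √k * x ^ ν := by
      rw [inv_rpow hx0.le, rpow_sub hx0, rpow_one]; field_simp
    rw [hpow] at hdual
    nlinarith [hsqrt]

end Specht

section CStarAlgebra

open CFC Ring

variable {𝒜 : Type*} [CStarAlgebra 𝒜] [PartialOrder 𝒜] [StarOrderedRing 𝒜]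

lemma conjSqrt_nonneg (c : 𝒜) {b : 𝒜} (hb : 0 ≤ b) : 0 ≤ conjSqrt c b := by
  simpa using conjSqrt_le_conjSqrt (c := c) hb

lemma inv_smul_one_le_ringInverse {a : 𝒜} (ha : IsStrictlyPositive a) {M : ℝ} (hM : 0 < M)
    (haM : a ≤ M • 1) : M⁻¹ • (1 : 𝒜) ≤ a⁻¹ʳ := by
  have := conjSqrt_le_conjSqrt (c := a⁻¹ʳ) haM
  rw [conjSqrt_ringInverse_self a, map_smul, conjSqrt_one _ ha.ringInverse.nonneg] at this
  exact (inv_smul_le_iff_of_pos hM).2 this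

lemma ringInverse_le_inv_smul_one {a : 𝒜} (ha : IsStrictlyPositive a) {m : ℝ} (hm : 0 < m)
    (hma : m • 1 ≤ a) : a⁻¹ʳ ≤ m⁻¹ • (1 : 𝒜) := by
  have := conjSqrt_le_conjSqrt (c := a⁻¹ʳ) hma
  rw [conjSqrt_ringInverse_self a, map_smul, conjSqrt_one _ ha.ringInverse.nonneg] at this
  exact (le_inv_smul_iff_of_pos hm).2 this

lemma spectrum_conjSqrt_ringInverse_subset_Icc {a b : 𝒜} (ha : IsStrictlyPositive a)
    {m M : ℝ} (hm : 0 < m) (hM : 0 < M) (hma : m • 1 ≤ a) (haM : a ≤ M • 1) (hmb : m • 1 ≤ b)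
    (hbM : b ≤ M • 1) : spectrum ℝ (conjSqrt a⁻¹ʳ b) ⊆ Icc (M / m)⁻¹ (M / m) := by
  have hsa : IsSelfAdjoint (conjSqrt a⁻¹ʳ b) :=
    .of_nonneg (conjSqrt_nonneg _ ((smul_nonneg hm.le zero_le_one).trans hmb))
  have hconj : ∀ c : ℝ, conjSqrt a⁻¹ʳ (c • 1) = c • a⁻¹ʳ := fun c => by
    rw [map_smul, conjSqrt_one _ ha.ringInverse.nonneg]
  intro x hx
  constructor
  · refine (algebraMap_le_iff_le_spectrum hsa).mp ?_ x hx
    calc algebraMap ℝ 𝒜 (M / m)⁻¹ = m • M⁻¹ • 1 := by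
          rw [Algebra.algebraMap_eq_smul_one, smul_smul, inv_div, div_eq_mul_inv]
      _ ≤ m • a⁻¹ʳ := smul_le_smul_of_nonneg_left (inv_smul_one_le_ringInverse ha hM haM) hm.le
      _ = conjSqrt a⁻¹ʳ (m • 1) := (hconj m).symm
      _ ≤ conjSqrt a⁻¹ʳ b := conjSqrt_le_conjSqrt hmb
  · refine (le_algebraMap_iff_spectrum_le hsa).mp ?_ x hx
    calc conjSqrt a⁻¹ʳ b ≤ conjSqrt a⁻¹ʳ (M • 1) := conjSqrt_le_conjSqrt hbM
      _ = M • a⁻¹ʳ := hconj M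
      _ ≤ M • m⁻¹ • 1 := smul_le_smul_of_nonneg_left (ringInverse_le_inv_smul_one ha hm hma) hM.le
      _ = algebraMap ℝ 𝒜 (M / m) := by
          rw [Algebra.algebraMap_eq_smul_one, smul_smul, div_eq_mul_inv]

lemma refinedYoung_eq_cfc {t : 𝒜} (ht : 0 ≤ t) (ν c : ℝ) :
    (1 - ν) • 1 + ν • t - c • ((1 / 2 : ℝ) • (1 + t) - t ^ (1 / 2 : ℝ)) =
      cfc (fun x : ℝ => (1 - ν) + ν * x - c * (1 / 2 * (1 + x) - x ^ (1 / 2 : ℝ))) t := by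
  have hsqrt : Continuous fun x : ℝ => x ^ (1 / 2 : ℝ) := Real.continuous_rpow_const (by norm_num)
  rw [cfc_sub (fun x => (1 - ν) + ν * x) (fun x => c * (1 / 2 * (1 + x) - x ^ (1 / 2 : ℝ))) t
      (by fun_prop) (by fun_prop), cfc_const_add (1 - ν) (fun x => ν * x) t,
    cfc_const_mul_id ν t, cfc_const_mul c (fun x => 1 / 2 * (1 + x) - x ^ (1 / 2 : ℝ)) t
      (by fun_prop),
    cfc_sub (fun x => 1 / 2 * (1 + x)) (fun x => x ^ (1 / 2 : ℝ)) t (by fun_prop) (by fun_prop),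
    cfc_const_mul (1 / 2) (fun x => 1 + x) t, cfc_const_add 1 (fun x => x) t, cfc_id' ℝ t,
    ← rpow_eq_cfc_real ht, map_one, Algebra.algebraMap_eq_smul_one]

lemma refinedYoung_le_specht_smul_rpow {t : 𝒜} (ht : 0 ≤ t) {k ν : ℝ} (hk : 1 < k)
    (hν : ν ∈ Icc 0 1) (hspec : spectrum ℝ t ⊆ Icc k⁻¹ k) :
    (1 - ν) • 1 + ν • t - (2 * min ν (1 - ν)) • ((1 / 2 : ℝ) • (1 + t) - t ^ (1 / 2 : ℝ)) ≤
      specht √k • t ^ ν := by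
  have hsqrt : Continuous fun x : ℝ => x ^ (1 / 2 : ℝ) := Real.continuous_rpow_const (by norm_num)
  have hpow : Continuous fun x : ℝ => x ^ ν := Real.continuous_rpow_const hν.1
  rw [refinedYoung_eq_cfc ht, rpow_eq_cfc_real ht,
    ← cfc_const_mul (specht √k) (fun x => x ^ ν) t (by fun_prop)]
  refine cfc_mono (fun x hx => ?_) (by fun_prop) (by fun_prop)
  have := refinedYoung_le_specht_sqrt_mul_rpow hk hν (hspec hx)
  rw [Real.sqrt_eq_rpow] at this
  linarith

end CStarAlgebra

open CFC Ring in
lemma geomMean_eq_conjSqrt {A : H →L[ℂ] H} (hA : IsStrictlyPositive A) (B : H →L[ℂ] H) (ν : ℝ) :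
    geomMean A B ν = conjSqrt A ((conjSqrt A⁻¹ʳ B) ^ ν) := by
  have hneg_half : A ^ (-(1 : ℝ) / 2) = sqrt A⁻¹ʳ := by
    rw [sqrt_ringInverse, sqrt_eq_rpow, inverse_rpow _ _ (by norm_num)]
    norm_num
  simp only [geomMean, conjSqrt_apply, hneg_half, sqrt_eq_rpow]

open CFC Ring in
theorem reverse_ratio_refined_young_operator_general (A B : H →L[ℂ] H)
    (hAu : IsUnit A) (m M : ℝ) (hm : 0 < m) (hmM : m < M)
    (hmA : m • (1 : H →L[ℂ] H) ≤ A) (hAM : A ≤ M • (1 : H →L[ℂ] H))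
    (hmB : m • (1 : H →L[ℂ] H) ≤ B) (hBM : B ≤ M • (1 : H →L[ℂ] H))
    (ν : ℝ) (hν : ν ∈ Set.Icc (0:ℝ) 1) (r : ℝ) (hr : r = min ν (1 - ν)) :
    (1 - ν) • A + ν • B - (2 * r) • ((1/2 : ℝ) • (A + B) - geomMean A B (1/2)) ≤
      specht (Real.sqrt (M / m)) • geomMean A B ν := by
  subst hr
  have hA : IsStrictlyPositive A :=
    IsStrictlyPositive.iff_of_unital.mpr ⟨(smul_nonneg hm.le zero_le_one).trans hmA, hAu⟩
  have hT0 := conjSqrt_nonneg A⁻¹ʳ ((smul_nonneg hm.le zero_le_one).trans hmB)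
  have hT := spectrum_conjSqrt_ringInverse_subset_Icc hA hm (hm.trans hmM) hmA hAM hmB hBM
  have key := conjSqrt_le_conjSqrt (c := A)
    (refinedYoung_le_specht_smul_rpow hT0 ((one_lt_div hm).2 hmM) hν hT)
  simpa [geomMean_eq_conjSqrt hA, conjSqrt_one A hA.nonneg,
    conjSqrt_conjSqrt_ringInverse A B hA] using key

theorem reverse_ratio_refined_young_operator (A B : H →L[ℂ] H)
    (hAu : IsUnit A) (hBu : IsUnit B) (m M : ℝ) (hm : 0 < m) (hmM : m < M)
    (hmA : m • (1 : H →L[ℂ] H) ≤ A) (hAM : A ≤ M • (1 : H →L[ℂ] H))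
    (hmB : m • (1 : H →L[ℂ] H) ≤ B) (hBM : B ≤ M • (1 : H →L[ℂ] H))
    (ν : ℝ) (hν : ν ∈ Set.Icc (0:ℝ) 1) (r : ℝ) (hr : r = min ν (1 - ν)) :
    (1 - ν) • A + ν • B - (2 * r) • ((1/2 : ℝ) • (A + B) - geomMean A B (1/2)) ≤
      specht (Real.sqrt (M / m)) • geomMean A B ν :=
  reverse_ratio_refined_young_operator_general A B hAu m M hm hmM hmA hAM hmB hBM ν hν r hr
end

section
/- For b > 0 and all ν ∈ [0, 1/2], we have L(1, √b) · log S(√b) ≥ ν b + (1−ν) − b^ν − ν(√b − 1)². -/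
/-- The logarithmic mean `L(x,y) = (y-x)/(log y - log x)` for `x ≠ y`, with `L(x,x) = x`. -/
noncomputable def logMean (x y : ℝ) : ℝ :=
  if x = y then x else (y - x) / (Real.log y - Real.log x)

/-!
Put `s = √b` and `L = L(1, s)`, so that `L log s = s - 1`. Unfolding Specht's ratio gives
`L log S(s) = 1 - L + L log L`, while the left-hand side is `1 + 2ν(s - 1) - exp (2ν log s)`.
The inequality is therefore `L (1 + x - log L) ≤ exp x` at `x = 2ν log s`: the tangent line of
`exp` at `log L`.
-/

open Real

lemma Real.mul_one_add_sub_log_le_exp {c : ℝ} (hc : 0 < c) (x : ℝ) :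
    c * (1 + x - log c) ≤ exp x := by
  calc c * (1 + x - log c) ≤ c * exp (x - log c) := by
        gcongr; linarith [add_one_le_exp (x - log c)]
    _ = exp x := by rw [exp_sub, exp_log hc, mul_div_cancel₀ _ hc.ne']

lemma logMean_pos {x y : ℝ} (hx : 0 < x) (hy : 0 < y) : 0 < logMean x y := by
  unfold logMean
  split_ifs with hxy
  · exact hx
  rcases lt_or_gt_of_ne hxy with h | h
  · exact div_pos (by linarith) (by linarith [log_lt_log hx h])
  · exact div_pos_of_neg_of_neg (by linarith) (by linarith [log_lt_log hy h])

lemma logMean_one_mul_log {h : ℝ} (hh : 0 < h) : logMean 1 h * log h = h - 1 := by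
  unfold logMean
  split_ifs with h1
  · simp [← h1]
  rw [log_one, sub_zero, div_mul_cancel₀ _ (log_ne_zero_of_pos_of_ne_one hh (Ne.symm h1))]

lemma log_rpow_inv_sub_one {h : ℝ} (hh : 0 < h) (h1 : h ≠ 1) :
    log (h ^ ((1 : ℝ) / (h - 1))) = (logMean 1 h)⁻¹ := by
  have hL := logMean_one_mul_log hh
  rw [log_rpow hh, one_div, ← hL, mul_inv,
    inv_mul_cancel_right₀ (log_ne_zero_of_pos_of_ne_one hh h1)]

lemma log_specht {h : ℝ} (hh : 0 < h) :
    log (specht h) = (logMean 1 h)⁻¹ - 1 + log (logMean 1 h) := by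
  by_cases h1 : h = 1
  · simp [specht, logMean, h1]
  have hL_pos := logMean_pos one_pos hh
  rw [specht, if_neg h1, log_rpow_inv_sub_one hh h1,
    log_div (rpow_pos_of_pos hh _).ne' (by positivity), log_mul (exp_ne_zero 1) (by positivity),
    log_exp, log_rpow_inv_sub_one hh h1, log_inv]
  ring

lemma logMean_one_mul_log_specht {h : ℝ} (hh : 0 < h) :
    logMean 1 h * log (specht h) = 1 - logMean 1 h + logMean 1 h * log (logMean 1 h) := by
  rw [log_specht hh, mul_add, mul_sub, mul_inv_cancel₀ (logMean_pos one_pos hh).ne']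
  ring

theorem logMean_log_specht_ge_general (b : ℝ) (hb : 0 < b) (ν : ℝ) :
    ν * b + (1 - ν) - b ^ ν - ν * (Real.sqrt b - 1) ^ 2 ≤
      logMean 1 (Real.sqrt b) * Real.log (specht (Real.sqrt b)) := by
  set s := √b
  have hs : 0 < s := sqrt_pos.mpr hb
  have hb_sq : s ^ 2 = b := sq_sqrt hb.le
  have hb_rpow : b ^ ν = exp (2 * ν * log s) := by
    rw [rpow_def_of_pos hb, ← hb_sq, log_pow]
    push_cast
    ring_nf
  have tangent := mul_one_add_sub_log_le_exp (logMean_pos one_pos hs) (2 * ν * log s)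
  have hL := logMean_one_mul_log hs
  rw [logMean_one_mul_log_specht hs, hb_rpow, ← hb_sq]
  linear_combination tangent - 2 * ν * hL

theorem logMean_log_specht_ge (b : ℝ) (hb : 0 < b) (ν : ℝ) (hν : ν ∈ Set.Icc (0:ℝ) (1/2)) :
    ν * b + (1 - ν) - b ^ ν - ν * (Real.sqrt b - 1) ^ 2 ≤
      logMean 1 (Real.sqrt b) * Real.log (specht (Real.sqrt b)) :=
  logMean_log_specht_ge_general b hb ν
end
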